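/- Let 𝒩_d be the qubit channel with Kraus operators K_+ = diag(cos((v−u)/2), cos((v+u)/2)) and K_− = [[0, sin((v−u)/2)],[sin((v+u)/2), 0]] for real u, v. Then the PDM R_AB = (1/2)𝒥[𝒩_d] (maximally mixed initial state) has eigenvalues (1/2, 1/2, (cos u cos v)/2, −(cos u cos v)/2), and hence S(R_AB) = 1. -/

import Mathlib

open Kronecker Matrix ComplexOrder

/-- Hermitian extension of the von Neumann entropy (base-2):
`S(X) = -Tr[X log₂|X|] = -∑ λᵢ log₂|λᵢ|` in terms of the eigenvalues of `X`. -/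
noncomputable def hermEntropy {n : Type*} [Fintype n] [DecidableEq n]
    {X : Matrix n n ℂ} (hX : X.IsHermitian) : ℝ :=
  -∑ i, hX.eigenvalues i * Real.logb 2 |hX.eigenvalues i|

/-- Jamiołkowski matrix `𝒥[𝒩] = ∑ᵢⱼ |i⟩⟨j| ⊗ 𝒩(|j⟩⟨i|)` of a map `𝒩`. -/
noncomputable def jam {n m : Type*} [Fintype n] [DecidableEq n]
    (𝒩 : Matrix n n ℂ → Matrix m m ℂ) : Matrix (n × m) (n × m) ℂ :=
  ∑ i : n, ∑ j : n, Matrix.single i j (1 : ℂ) ⊗ₖ 𝒩 (Matrix.single j i 1)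

/-- The pseudo-density matrix (spatiotemporal product)
`𝒩 ⋆ ρ = (1/2){ρ ⊗ 𝟙, 𝒥[𝒩]}`. -/
noncomputable def pdm {n m : Type*} [Fintype n] [DecidableEq n] [Fintype m] [DecidableEq m]
    (𝒩 : Matrix n n ℂ → Matrix m m ℂ) (ρ : Matrix n n ℂ) : Matrix (n × m) (n × m) ℂ :=
  (1 / 2 : ℂ) • ((ρ ⊗ₖ (1 : Matrix m m ℂ)) * jam 𝒩 + jam 𝒩 * (ρ ⊗ₖ (1 : Matrix m m ℂ)))

/-!
Both Kraus operators are real and either diagonal or antidiagonal, so after ordering the basis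
as `00, 11 | 01, 10` the Jamiołkowski matrix is block diagonal, with blocks
`[[a², cd], [cd, b²]]` and `[[d², ab], [ab, c²]]` for `K₊ = diag(a, b)`, `K₋ = [[0, c], [d, 0]]`.
Since `a² + c² = b² + d² = 1` and `a² + b² = 1 + cos u cos v`, the traces and determinants of
the halved blocks give the eigenvalues `1/2, ±(cos u cos v)/2`. In the entropy the pair
`±(cos u cos v)/2` cancels because `t ↦ t log₂|t|` is odd, and the two halves contribute `1`.
-/

open Polynomial

lemma Matrix.mul_single_mul_apply {l m n o α : Type*} [Fintype m] [Fintype n] [DecidableEq m]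
    [DecidableEq n] [NonUnitalNonAssocSemiring α] (K : Matrix l m α) (L : Matrix n o α)
    (j : m) (i : n) (c : α) (p : l) (q : o) :
    (K * single j i c * L) p q = K p j * c * L i q := by
  simp [mul_apply, single_apply, ite_and]

lemma Matrix.charpoly_fin_two_eq_of_trace_of_det {R : Type*} [CommRing R] [Nontrivial R]
    {M : Matrix (Fin 2) (Fin 2) R} {s t : R} (htr : M.trace = s + t) (hdet : M.det = s * t) :
    M.charpoly = (X - C s) * (X - C t) := by
  rw [charpoly_fin_two, htr, hdet, C_add, C_mul]
  ring

lemma Matrix.IsHermitian.map_eigenvalues_eq_of_charpoly_eq {𝕜 n : Type*} [RCLike 𝕜]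
    [Fintype n] [DecidableEq n] {A : Matrix n n 𝕜} (hA : A.IsHermitian) {s : Multiset ℝ}
    (h : A.charpoly = (s.map fun r : ℝ => X - C (r : 𝕜)).prod) :
    Finset.univ.val.map hA.eigenvalues = s := by
  have hroots := hA.roots_charpoly_eq_eigenvalues
  rw [h, ← Function.comp_def (fun z : 𝕜 => X - C z), ← Multiset.map_map,
    roots_multiset_prod_X_sub_C, ← Multiset.map_map] at hroots
  exact Multiset.map_injective RCLike.ofReal_injective hroots.symm

lemma hermEntropy_eq_neg_sum_map_eigenvalues {n : Type*} [Fintype n] [DecidableEq n]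
    {X : Matrix n n ℂ} (hX : X.IsHermitian) :
    hermEntropy hX =
      -((Finset.univ.val.map hX.eigenvalues).map fun t => t * Real.logb 2 |t|).sum := by
  rw [hermEntropy, Multiset.map_map]
  rfl

lemma hermEntropy_eq_one_of_map_eigenvalues_eq {n : Type*} [Fintype n] [DecidableEq n]
    {X : Matrix n n ℂ} (hX : X.IsHermitian) {x : ℝ}
    (h : Finset.univ.val.map hX.eigenvalues = {1 / 2, 1 / 2, x, -x}) :
    hermEntropy hX = 1 := by
  rw [hermEntropy_eq_neg_sum_map_eigenvalues, h]
  simp only [Multiset.insert_eq_cons, Multiset.map_cons, Multiset.map_singleton,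
    Multiset.sum_cons, Multiset.sum_singleton, abs_neg, neg_mul, add_neg_cancel, add_zero]
  rw [abs_of_pos one_half_pos, one_div, Real.logb_inv, Real.logb_self_eq_one one_lt_two]
  ring

lemma jam_apply {n m : Type*} [Fintype n] [DecidableEq n]
    (𝒩 : Matrix n n ℂ → Matrix m m ℂ) (x y : n × m) :
    jam 𝒩 x y = 𝒩 (single y.1 x.1 1) x.2 y.2 := by
  simp [jam, Matrix.sum_apply, single, ite_and]

lemma jam_kraus_apply {n m : Type*} [Fintype n] [DecidableEq n] (K L : Matrix m n ℂ)
    (x y : n × m) :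
    jam (fun X => K * X * Kᴴ + L * X * Lᴴ) x y =
      K x.2 y.1 * star (K y.2 x.1) + L x.2 y.1 * star (L y.2 x.1) := by
  simp [jam_apply, mul_single_mul_apply]

def diagSumOffDiag : Fin 2 × Fin 2 ≃ Fin 2 ⊕ Fin 2 where
  toFun p := if p.1 = p.2 then Sum.inl p.1 else Sum.inr p.1
  invFun := Sum.elim (fun i => (i, i)) ![(0, 1), (1, 0)]
  left_inv p := by fin_cases p <;> decide
  right_inv s := by rcases s with i | i <;> fin_cases i <;> decide

lemma reindex_half_jam_diag_antidiag (a b c d : ℝ) :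
    reindex diagSumOffDiag diagSumOffDiag ((1 / 2 : ℂ) •
      jam fun X => !![(a : ℂ), 0; 0, (b : ℂ)] * X * !![(a : ℂ), 0; 0, (b : ℂ)]ᴴ +
        !![0, (c : ℂ); (d : ℂ), 0] * X * !![0, (c : ℂ); (d : ℂ), 0]ᴴ) =
      fromBlocks !![(a ^ 2 / 2 : ℂ), c * d / 2; c * d / 2, b ^ 2 / 2] 0 0
        !![(d ^ 2 / 2 : ℂ), a * b / 2; a * b / 2, c ^ 2 / 2] := by
  ext (i | i) (j | j) <;> fin_cases i <;> fin_cases j <;>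
    simp only [reindex_apply, submatrix_apply, Matrix.smul_apply, jam_kraus_apply] <;>
    simp [diagSumOffDiag, sq, mul_comm, div_eq_mul_inv]

lemma map_eigenvalues_half_jam_diag_antidiag {a b c d k : ℝ} (hac : a ^ 2 + c ^ 2 = 1)
    (hbd : b ^ 2 + d ^ 2 = 1) (hk : a ^ 2 + b ^ 2 = 1 + k)
    (hR : ((1 / 2 : ℂ) •
      jam fun X => !![(a : ℂ), 0; 0, (b : ℂ)] * X * !![(a : ℂ), 0; 0, (b : ℂ)]ᴴ +
        !![0, (c : ℂ); (d : ℂ), 0] * X * !![0, (c : ℂ); (d : ℂ), 0]ᴴ).IsHermitian) :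
    Finset.univ.val.map hR.eigenvalues = {1 / 2, 1 / 2, k / 2, -(k / 2)} := by
  have hac' : (a : ℂ) ^ 2 + (c : ℂ) ^ 2 = 1 := by exact_mod_cast hac
  have hbd' : (b : ℂ) ^ 2 + (d : ℂ) ^ 2 = 1 := by exact_mod_cast hbd
  have hk' : (a : ℂ) ^ 2 + (b : ℂ) ^ 2 = 1 + k := by exact_mod_cast hk
  apply hR.map_eigenvalues_eq_of_charpoly_eq
  rw [← charpoly_reindex diagSumOffDiag, reindex_half_jam_diag_antidiag,
    charpoly_fromBlocks_zero₁₂,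
    charpoly_fin_two_eq_of_trace_of_det (s := ((1 / 2 : ℝ) : ℂ)) (t := ((k / 2 : ℝ) : ℂ)),
    charpoly_fin_two_eq_of_trace_of_det (s := ((1 / 2 : ℝ) : ℂ)) (t := ((-(k / 2) : ℝ) : ℂ))]
  · simp only [Multiset.insert_eq_cons, Multiset.map_cons, Multiset.map_singleton,
      Multiset.prod_cons, Multiset.prod_singleton, Complex.coe_algebraMap]
    ring
  · rw [trace_fin_two_of]
    push_cast
    linear_combination (hac' + hbd' - hk') / 2
  · rw [det_fin_two_of]
    push_cast
    linear_combination ((d : ℂ) ^ 2 * hac' + (1 - (a : ℂ) ^ 2) * hbd' - hk') / 4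
  · rw [trace_fin_two_of]
    push_cast
    linear_combination hk' / 2
  · rw [det_fin_two_of]
    push_cast
    linear_combination (hk' - (d : ℂ) ^ 2 * hac' - (1 - (a : ℂ) ^ 2) * hbd') / 4

lemma cos_half_sub_sq_add_cos_half_add_sq (u v : ℝ) :
    Real.cos ((v - u) / 2) ^ 2 + Real.cos ((v + u) / 2) ^ 2 = 1 + Real.cos u * Real.cos v := by
  rw [Real.cos_sq, Real.cos_sq, show 2 * ((v - u) / 2) = v - u by ring,
    show 2 * ((v + u) / 2) = v + u by ring, Real.cos_sub, Real.cos_add]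
  ring

/-- For the qubit channel with Kraus operators
`K₊ = diag(cos((v−u)/2), cos((v+u)/2))` and `K₋ = [[0, sin((v−u)/2)],[sin((v+u)/2), 0]]`,
the PDM `R = (1/2)𝒥[𝒩_d]` (maximally mixed initial state) has eigenvalues
`(1/2, 1/2, (cos u cos v)/2, −(cos u cos v)/2)`, and hence `S(R) = 1`. -/
theorem pdm_choi_rank_two_spectrum (u v : ℝ)
    (Kp Km : Matrix (Fin 2) (Fin 2) ℂ)
    (hKp : Kp = !![(Real.cos ((v - u) / 2) : ℂ), 0; 0, (Real.cos ((v + u) / 2) : ℂ)])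
    (hKm : Km = !![0, (Real.sin ((v - u) / 2) : ℂ); (Real.sin ((v + u) / 2) : ℂ), 0])
    (hR : ((1 / 2 : ℂ) •
        jam (fun X => Kp * X * Kpᴴ + Km * X * Kmᴴ)).IsHermitian) :
    Multiset.map hR.eigenvalues Finset.univ.val =
      {1 / 2, 1 / 2, Real.cos u * Real.cos v / 2, -(Real.cos u * Real.cos v / 2)} ∧
      hermEntropy hR = 1 := by
  subst hKp hKm
  have hspec := map_eigenvalues_half_jam_diag_antidiag (Real.cos_sq_add_sin_sq _)
    (Real.cos_sq_add_sin_sq _) (cos_half_sub_sq_add_cos_half_add_sq u v) hR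
  exact ⟨hspec, hermEntropy_eq_one_of_map_eigenvalues_eq hR hspec⟩
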